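/- arXiv:1012.0635 — 4 statements merged into one kernel-verified Lean document; each statement's English description precedes it below -/
import Mathlib

section
/- Let (G,<) be a bi-ordered group and a, b ∈ G with [a,b] > 1. Then for all integers m > 1, [a, b^m] > [a, b], where [a,b] = a⁻¹b⁻¹ab. -/
section

variable {G : Type*} [Group G]

theorem commutator_zpow_succ (a b : G) (n : ℤ) :
    a⁻¹ * (b ^ (n + 1))⁻¹ * a * b ^ (n + 1) =
      (a⁻¹ * (b ^ n)⁻¹ * a * b ^ n) * ((b ^ n)⁻¹ * (a⁻¹ * b⁻¹ * a * b) * b ^ n) := by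
  group

variable [Preorder G] [MulLeftStrictMono G] [MulRightStrictMono G]

theorem one_lt_inv_mul_mul_of_one_lt {g : G} (hg : 1 < g) (c : G) : 1 < c⁻¹ * g * c :=
  calc (1 : G) = c⁻¹ * 1 * c := by group
    _ < c⁻¹ * g * c := mul_lt_mul_left (mul_lt_mul_right hg _) _

theorem strictMono_commutator_zpow {a b : G} (h : 1 < a⁻¹ * b⁻¹ * a * b) :
    StrictMono fun n : ℤ ↦ a⁻¹ * (b ^ n)⁻¹ * a * b ^ n :=
  strictMono_int_of_lt_succ fun n ↦ by
    rw [commutator_zpow_succ]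
    exact lt_mul_of_one_lt_right' _ (one_lt_inv_mul_mul_of_one_lt h _)

end

theorem commutator_pow_right_gt {G : Type*} [Group G] [LinearOrder G]
    [CovariantClass G G (· * ·) (· < ·)]
    [CovariantClass G G (Function.swap (· * ·)) (· < ·)]
    (a b : G) (h : 1 < a⁻¹ * b⁻¹ * a * b) :
    ∀ m : ℤ, 1 < m → a⁻¹ * b⁻¹ * a * b < a⁻¹ * (b ^ m)⁻¹ * a * b ^ m := by
  intro m hm
  simpa using strictMono_commutator_zpow h hm
end

section
/- Let (G,<) be a bi-ordered group and a, b ∈ G with [a,b] > 1. Then for all integers m, n > 1, [a^n, b^m] > [a, b], where [a,b] = a⁻¹b⁻¹ab. -/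
/-! Writing `[x, y] = x⁻¹ * y⁻¹ * x * y`, one has the expansions
`[x * y, z] = y⁻¹ [x, z] y * [y, z]` and `[x, y * z] = [x, z] * z⁻¹ [x, y] z`.
In a bi-ordered group conjugates of positive elements are positive, so once `[x, z] > 1`
(resp. `[x, y] > 1`) each expansion exceeds its last (resp. first) factor. Induction on the
exponents gives `[a ^ n, b ^ m] > 1` for `n, m ≥ 1`, and then
`[a, b] < [a ^ n, b] < [a ^ n, b ^ m]` for `n, m ≥ 2`. -/

section BiOrdered

variable {G : Type*} [Group G] [LinearOrder G] [MulLeftStrictMono G] [MulRightStrictMono G]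

theorem one_lt_inv_mul_mul_of_one_lt_s9 (a : G) {t : G} (ht : 1 < t) : 1 < a⁻¹ * t * a := by
  simpa using mul_lt_mul_left (mul_lt_mul_right ht a⁻¹) a

theorem lt_commutator_mul_left {x z : G} (y : G) (h : 1 < x⁻¹ * z⁻¹ * x * z) :
    y⁻¹ * z⁻¹ * y * z < (x * y)⁻¹ * z⁻¹ * (x * y) * z := by
  have expand : (x * y)⁻¹ * z⁻¹ * (x * y) * z
      = y⁻¹ * (x⁻¹ * z⁻¹ * x * z) * y * (y⁻¹ * z⁻¹ * y * z) := by
    group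
  rw [expand]
  simpa using mul_lt_mul_left (one_lt_inv_mul_mul_of_one_lt_s9 y h) (y⁻¹ * z⁻¹ * y * z)

theorem lt_commutator_mul_right {x y : G} (z : G) (h : 1 < x⁻¹ * y⁻¹ * x * y) :
    x⁻¹ * z⁻¹ * x * z < x⁻¹ * (y * z)⁻¹ * x * (y * z) := by
  have expand : x⁻¹ * (y * z)⁻¹ * x * (y * z)
      = x⁻¹ * z⁻¹ * x * z * (z⁻¹ * (x⁻¹ * y⁻¹ * x * y) * z) := by
    group
  rw [expand]
  simpa using mul_lt_mul_right (one_lt_inv_mul_mul_of_one_lt_s9 z h) (x⁻¹ * z⁻¹ * x * z)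

theorem one_lt_commutator_pow_left {a b : G} (h : 1 < a⁻¹ * b⁻¹ * a * b) {n : ℕ} (hn : 0 < n) :
    1 < (a ^ n)⁻¹ * b⁻¹ * a ^ n * b := by
  induction n, hn using Nat.le_induction with
  | base => simpa using h
  | succ n _ ih => simpa [pow_succ] using h.trans (lt_commutator_mul_left a ih)

theorem one_lt_commutator_pow_right {a b : G} (h : 1 < a⁻¹ * b⁻¹ * a * b) {m : ℕ}
    (hm : 0 < m) : 1 < a⁻¹ * (b ^ m)⁻¹ * a * b ^ m := by
  induction m, hm using Nat.le_induction with
  | base => simpa using h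
  | succ m _ ih => simpa [pow_succ] using h.trans (lt_commutator_mul_right b ih)

theorem commutator_lt_commutator_pow_left {a b : G} (h : 1 < a⁻¹ * b⁻¹ * a * b) {n : ℕ}
    (hn : 1 < n) : a⁻¹ * b⁻¹ * a * b < (a ^ n)⁻¹ * b⁻¹ * a ^ n * b := by
  obtain ⟨k, rfl⟩ : ∃ k, n = k + 1 := ⟨n - 1, by omega⟩
  simpa [pow_succ] using lt_commutator_mul_left a (one_lt_commutator_pow_left h (n := k) (by omega))

theorem commutator_lt_commutator_pow_right {a b : G} (h : 1 < a⁻¹ * b⁻¹ * a * b) {m : ℕ}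
    (hm : 1 < m) : a⁻¹ * b⁻¹ * a * b < a⁻¹ * (b ^ m)⁻¹ * a * b ^ m := by
  obtain ⟨k, rfl⟩ : ∃ k, m = k + 1 := ⟨m - 1, by omega⟩
  simpa [pow_succ] using lt_commutator_mul_right b (one_lt_commutator_pow_right h (m := k) (by omega))

end BiOrdered

theorem commutator_pow_pow_gt {G : Type*} [Group G] [LinearOrder G]
    [CovariantClass G G (· * ·) (· < ·)]
    [CovariantClass G G (Function.swap (· * ·)) (· < ·)]
    (a b : G) (h : 1 < a⁻¹ * b⁻¹ * a * b) :
    ∀ m n : ℤ, 1 < m → 1 < n →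
      a⁻¹ * b⁻¹ * a * b < (a ^ n)⁻¹ * (b ^ m)⁻¹ * a ^ n * b ^ m := by
  intro m n hm hn
  lift m to ℕ using by omega
  lift n to ℕ using by omega
  simp only [zpow_natCast]
  have hn' : 1 < n := by exact_mod_cast hn
  have hm' : 1 < m := by exact_mod_cast hm
  have h' : 1 < (a ^ n)⁻¹ * b⁻¹ * a ^ n * b := one_lt_commutator_pow_left h (by omega)
  exact (commutator_lt_commutator_pow_left h hn').trans (commutator_lt_commutator_pow_right h' hm')
end

section
/- Let (G,<_G) be a bi-ordered group and H ≤ G a finite index subgroup, with <_H the restriction of <_G to H. Then C_H = C_G ∩ H, where C_G and C_H denote the convex commutator subgroups of (G,<_G) and (H,<_H) respectively. -/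
def IsConvex {G : Type*} [Group G] [LT G] (K : Subgroup G) : Prop :=
  ∀ ⦃h h' g : G⦄, h ∈ K → h' ∈ K → h < g → g < h' → g ∈ K

def convexCommutator (G : Type*) [Group G] [LT G] : Subgroup G :=
  sInf {K : Subgroup G | IsConvex K ∧ commutator G ≤ K}

/-!
Restricting to `H` shows `C_H ⊆ C_G ∩ H`. Conversely, let `S ⊆ G` be the image of `C_H` and `Ŝ`
its order-convex hull in `G`, a convex subgroup. In a bi-ordered group `n ↦ ⁅x ^ n, y⁆` is monotone
or antitone (by the sign of `⁅x, y⁆`), starting at `1`, so a convex subgroup containing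
`⁅x ^ m, y ^ n⁆` for some `m, n ≥ 1` contains `⁅x, y⁆`. As `H` has finite index, suitable powers of
`x` and `y` lie in `H`, whence `Ŝ` contains every commutator of `G` and so `C_G ⊆ Ŝ`. Finally
`Ŝ ∩ H = S` because `C_H` is convex in `H`.
-/

open scoped commutatorElement

theorem commutatorElement_pow_succ_left {G : Type*} [Group G] (x y : G) (k : ℕ) :
    ⁅x ^ (k + 1), y⁆ = x ^ k * ⁅x, y⁆ * (x ^ k)⁻¹ * ⁅x ^ k, y⁆ := by
  simp only [commutatorElement_def]
  group

section LT

variable {G : Type*} [Group G] [LT G]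

variable (G) in
theorem isConvex_convexCommutator : IsConvex (convexCommutator G) := by
  intro a b g ha hb hag hgb
  rw [convexCommutator, Subgroup.mem_sInf] at *
  exact fun K hK => hK.1 (ha K hK) (hb K hK) hag hgb

variable (G) in
theorem commutator_le_convexCommutator : commutator G ≤ convexCommutator G :=
  le_sInf fun _ hK => hK.2

theorem convexCommutator_le {K : Subgroup G} (hK : IsConvex K) (hcomm : commutator G ≤ K) :
    convexCommutator G ≤ K :=
  sInf_le ⟨hK, hcomm⟩

theorem IsConvex.comap_subtype {K : Subgroup G} (hK : IsConvex K) (H : Subgroup G) :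
    IsConvex (K.comap H.subtype) :=
  fun _ _ _ ha hb hag hgb => hK ha hb hag hgb

theorem convexCommutator_le_comap_subtype (H : Subgroup G) :
    convexCommutator H ≤ (convexCommutator G).comap H.subtype := by
  refine convexCommutator_le ((isConvex_convexCommutator G).comap_subtype H) ?_
  rw [← Subgroup.map_le_iff_le_comap, Subgroup.map_subtype_commutator]
  exact (Subgroup.commutator_mono le_top le_top).trans (commutator_le_convexCommutator G)

end LT

section PartialOrder

variable {G : Type*} [Group G] [PartialOrder G]

theorem IsConvex.mem_of_le_of_le {K : Subgroup G} (hK : IsConvex K) {a b g : G}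
    (ha : a ∈ K) (hb : b ∈ K) (hag : a ≤ g) (hgb : g ≤ b) : g ∈ K := by
  rcases hag.eq_or_lt with rfl | hag
  · exact ha
  rcases hgb.eq_or_lt with rfl | hgb
  · exact hb
  exact hK ha hb hag hgb

variable [MulLeftMono G] [MulRightMono G]

def Subgroup.orderConvexHull (S : Subgroup G) : Subgroup G where
  carrier := {g | ∃ a ∈ S, ∃ b ∈ S, a ≤ g ∧ g ≤ b}
  one_mem' := ⟨1, S.one_mem, 1, S.one_mem, le_rfl, le_rfl⟩
  mul_mem' := by
    rintro g g' ⟨a, ha, b, hb, hag, hgb⟩ ⟨a', ha', b', hb', hag', hgb'⟩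
    exact ⟨a * a', S.mul_mem ha ha', b * b', S.mul_mem hb hb',
      mul_le_mul' hag hag', mul_le_mul' hgb hgb'⟩
  inv_mem' := by
    rintro g ⟨a, ha, b, hb, hag, hgb⟩
    exact ⟨b⁻¹, S.inv_mem hb, a⁻¹, S.inv_mem ha, inv_le_inv_iff.mpr hgb, inv_le_inv_iff.mpr hag⟩

theorem Subgroup.le_orderConvexHull (S : Subgroup G) : S ≤ S.orderConvexHull :=
  fun g hg => ⟨g, hg, g, hg, le_rfl, le_rfl⟩

theorem Subgroup.isConvex_orderConvexHull (S : Subgroup G) : IsConvex S.orderConvexHull := by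
  rintro c d g ⟨a, ha, -, -, hac, -⟩ ⟨-, -, b, hb, -, hdb⟩ hcg hgd
  exact ⟨a, ha, b, hb, hac.trans hcg.le, hgd.le.trans hdb⟩

theorem IsConvex.orderConvexHull_map_subtype_inf_le {H : Subgroup G} {K : Subgroup H}
    (hK : IsConvex K) : (K.map H.subtype).orderConvexHull ⊓ H ≤ K.map H.subtype := by
  rintro g ⟨⟨-, ⟨a, ha, rfl⟩, -, ⟨b, hb, rfl⟩, hag, hgb⟩, hg⟩
  exact ⟨⟨g, hg⟩, hK.mem_of_le_of_le ha hb hag hgb, rfl⟩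

theorem one_le_conj {a : G} (ha : 1 ≤ a) (b : G) : 1 ≤ b * a * b⁻¹ := by
  simpa using mul_le_mul_left (mul_le_mul_right ha b) b⁻¹

theorem conj_le_one {a : G} (ha : a ≤ 1) (b : G) : b * a * b⁻¹ ≤ 1 := by
  simpa using mul_le_mul_left (mul_le_mul_right ha b) b⁻¹

end PartialOrder

section LinearOrder

variable {G : Type*} [Group G] [LinearOrder G] [MulLeftMono G] [MulRightMono G]

theorem monotone_commutatorElement_pow {x y : G} (h : 1 ≤ ⁅x, y⁆) :
    Monotone fun n : ℕ => ⁅x ^ n, y⁆ :=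
  monotone_nat_of_le_succ fun k => by
    rw [commutatorElement_pow_succ_left]
    exact le_mul_of_one_le_left' (one_le_conj h _)

theorem antitone_commutatorElement_pow {x y : G} (h : ⁅x, y⁆ ≤ 1) :
    Antitone fun n : ℕ => ⁅x ^ n, y⁆ :=
  antitone_nat_of_succ_le fun k => by
    rw [commutatorElement_pow_succ_left]
    exact mul_le_of_le_one_left' (conj_le_one h _)

theorem IsConvex.commutatorElement_mem_of_pow_left {K : Subgroup G} (hK : IsConvex K)
    {x y : G} {n : ℕ} (hn : n ≠ 0) (h : ⁅x ^ n, y⁆ ∈ K) : ⁅x, y⁆ ∈ K := by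
  have h1n : 1 ≤ n := Nat.one_le_iff_ne_zero.mpr hn
  rcases le_total 1 ⁅x, y⁆ with hxy | hxy
  · exact hK.mem_of_le_of_le K.one_mem h hxy
      (by simpa using monotone_commutatorElement_pow hxy h1n)
  · exact hK.mem_of_le_of_le h K.one_mem
      (by simpa using antitone_commutatorElement_pow hxy h1n) hxy

theorem IsConvex.commutatorElement_mem_of_pow {K : Subgroup G} (hK : IsConvex K)
    {x y : G} {m n : ℕ} (hm : m ≠ 0) (hn : n ≠ 0) (h : ⁅x ^ m, y ^ n⁆ ∈ K) : ⁅x, y⁆ ∈ K := by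
  have hy : ⁅y ^ n, x⁆ ∈ K := by
    simpa [commutatorElement_inv] using K.inv_mem (hK.commutatorElement_mem_of_pow_left hm h)
  simpa [commutatorElement_inv] using K.inv_mem (hK.commutatorElement_mem_of_pow_left hn hy)

theorem IsConvex.commutator_le_of_finiteIndex {K : Subgroup G} (hK : IsConvex K)
    (H : Subgroup G) [H.FiniteIndex] (hHK : ⁅H, H⁆ ≤ K) : commutator G ≤ K := by
  rw [commutator_def, Subgroup.commutator_le]
  intro x _ y _
  obtain ⟨m, hm, -, hxm⟩ := H.exists_pow_mem_of_index_ne_zero H.index_ne_zero_of_finite x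
  obtain ⟨n, hn, -, hyn⟩ := H.exists_pow_mem_of_index_ne_zero H.index_ne_zero_of_finite y
  exact hK.commutatorElement_mem_of_pow hm.ne' hn.ne'
    (hHK (Subgroup.commutator_mem_commutator hxm hyn))

theorem convexCommutator_le_orderConvexHull (H : Subgroup G) [H.FiniteIndex] :
    convexCommutator G ≤ ((convexCommutator H).map H.subtype).orderConvexHull := by
  have hconvex := Subgroup.isConvex_orderConvexHull ((convexCommutator H).map H.subtype)
  refine convexCommutator_le hconvex (hconvex.commutator_le_of_finiteIndex H ?_)
  rw [← Subgroup.map_subtype_commutator]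
  exact (Subgroup.map_mono (commutator_le_convexCommutator H)).trans
    (Subgroup.le_orderConvexHull _)

end LinearOrder

theorem convexCommutator_of_finiteIndex {G : Type*} [Group G] [LinearOrder G]
    [CovariantClass G G (· * ·) (· < ·)]
    [CovariantClass G G (Function.swap (· * ·)) (· < ·)]
    (H : Subgroup G) [H.FiniteIndex] :
    (convexCommutator H).map H.subtype = convexCommutator G ⊓ H := by
  have := mulLeftMono_of_mulLeftStrictMono G
  have := mulRightMono_of_mulRightStrictMono G
  refine le_antisymm ?_ ?_
  · exact le_inf (Subgroup.map_le_iff_le_comap.mpr (convexCommutator_le_comap_subtype H))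
      (Subgroup.map_subtype_le _)
  · exact (inf_le_inf_right _ (convexCommutator_le_orderConvexHull H)).trans
      (isConvex_convexCommutator H).orderConvexHull_map_subtype_inf_le
end

section
/- Let G be a group that is an HNN-extension of a group H by an automorphism φ (i.e., G ≅ H ⋊_φ ℤ). Then G is bi-orderable if and only if there exists a bi-ordering of H which is preserved by φ. -/
/-!
An order on `H ⋊ ℤ` restricts along `inl` to an order on `H`, and `φ` acts on `inl H` as
conjugation by the generator `inr 1`, which a bi-invariant order respects. Conversely, if `φ`
preserves a bi-ordering of `H`, then so do all its powers, and ordering `H ⋊ ℤ` lexicographically,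
first by the `ℤ`-coordinate and then by the `H`-coordinate, gives a bi-ordering.
-/

/-- A group is bi-orderable if it admits a total order invariant under
multiplication on both sides. -/
def BiOrderable (G : Type*) [Group G] : Prop :=
  ∃ lo : LinearOrder G,
    (∀ a b c : G, lo.lt a b → lo.lt (c * a) (c * b)) ∧
    (∀ a b c : G, lo.lt a b → lo.lt (a * c) (b * c))

theorem biOrderable_iff {G : Type*} [Group G] :
    BiOrderable G ↔ ∃ _ : LinearOrder G, MulLeftStrictMono G ∧ MulRightStrictMono G :=
  exists_congr fun _ => and_congr
    ⟨fun h => ⟨fun c _ _ => h _ _ c⟩, fun h _ _ c => h.elim c⟩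
    ⟨fun h => ⟨fun c _ _ => h _ _ c⟩, fun h _ _ c => h.elim c⟩

def MulAut.strictMonoSubgroup (N : Type*) [Group N] [LinearOrder N] : Subgroup (MulAut N) where
  carrier := {ψ | StrictMono ψ}
  mul_mem' hψ hχ := hψ.comp hχ
  one_mem' := strictMono_id
  inv_mem' {ψ} hψ a b hab := by
    rwa [← hψ.lt_iff_lt, ← MulAut.mul_apply, ← MulAut.mul_apply, mul_inv_cancel]

namespace SemidirectProduct

variable {N K : Type*} [Group N] [Group K] {ψ : K →* MulAut N}

theorem inl_apply_lt_inl_apply [LinearOrder (N ⋊[ψ] K)] [MulLeftStrictMono (N ⋊[ψ] K)]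
    [MulRightStrictMono (N ⋊[ψ] K)] {a b : N} (hab : (inl a : N ⋊[ψ] K) < inl b) (k : K) :
    (inl (ψ k a) : N ⋊[ψ] K) < inl (ψ k b) := by
  rw [inl_aut, inl_aut]
  exact mul_lt_mul_left (mul_lt_mul_right hab _) _

def toLexRightLeft (g : N ⋊[ψ] K) : Lex (K × N) := toLex (g.right, g.left)

theorem toLexRightLeft_injective : Function.Injective (toLexRightLeft (ψ := ψ)) := fun _ _ h =>
  SemidirectProduct.ext (congrArg (·.2) (toLex.injective h)) (congrArg (·.1) (toLex.injective h))

variable [LinearOrder N] [LinearOrder K]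

theorem toLexRightLeft_lt_iff {g h : N ⋊[ψ] K} :
    toLexRightLeft g < toLexRightLeft h ↔
      g.right < h.right ∨ g.right = h.right ∧ g.left < h.left :=
  Prod.Lex.toLex_lt_toLex

theorem toLexRightLeft_mul_lt_mul_left [MulLeftStrictMono N] [MulLeftStrictMono K]
    (hψ : ∀ k, StrictMono (ψ k))
    {a b : N ⋊[ψ] K} (hab : toLexRightLeft a < toLexRightLeft b) (c : N ⋊[ψ] K) :
    toLexRightLeft (c * a) < toLexRightLeft (c * b) := by
  rw [toLexRightLeft_lt_iff] at hab ⊢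
  rcases hab with hright | ⟨hright, hleft⟩
  · exact Or.inl (mul_lt_mul_right hright c.right)
  · exact Or.inr ⟨by rw [mul_right, mul_right, hright],
      mul_lt_mul_right (hψ c.right hleft) c.left⟩

theorem toLexRightLeft_mul_lt_mul_right [MulRightStrictMono N] [MulRightStrictMono K]
    {a b : N ⋊[ψ] K} (hab : toLexRightLeft a < toLexRightLeft b) (c : N ⋊[ψ] K) :
    toLexRightLeft (a * c) < toLexRightLeft (b * c) := by
  rw [toLexRightLeft_lt_iff] at hab ⊢
  rcases hab with hright | ⟨hright, hleft⟩
  · exact Or.inl (mul_lt_mul_left hright c.right)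
  · refine Or.inr ⟨by rw [mul_right, mul_right, hright], ?_⟩
    rw [mul_left, mul_left, hright]
    exact mul_lt_mul_left hleft _

theorem biOrderable_of_strictMono [MulLeftStrictMono N] [MulRightStrictMono N]
    [MulLeftStrictMono K] [MulRightStrictMono K]
    (hψ : ∀ k, StrictMono (ψ k)) : BiOrderable (N ⋊[ψ] K) :=
  ⟨LinearOrder.lift' toLexRightLeft toLexRightLeft_injective,
    fun _ _ c hab => toLexRightLeft_mul_lt_mul_left hψ hab c,
    fun _ _ c hab => toLexRightLeft_mul_lt_mul_right hab c⟩

end SemidirectProduct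

open SemidirectProduct

theorem biorderable_semidirect_iff {H : Type*} [Group H] (φ : H ≃* H) :
    BiOrderable (H ⋊[zpowersHom (MulAut H) φ] Multiplicative ℤ) ↔
      ∃ lo : LinearOrder H,
        (∀ a b c : H, lo.lt a b → lo.lt (c * a) (c * b)) ∧
        (∀ a b c : H, lo.lt a b → lo.lt (a * c) (b * c)) ∧
        (∀ a b : H, lo.lt a b → lo.lt (φ a) (φ b)) := by
  constructor
  · rw [biOrderable_iff]
    rintro ⟨_, _, _⟩
    refine ⟨LinearOrder.lift' (inl : H →* H ⋊[zpowersHom (MulAut H) φ] Multiplicative ℤ)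
      inl_injective, fun a b c hab => ?_, fun a b c hab => ?_, fun a b hab => ?_⟩
    · show (inl (c * a) : H ⋊[_] _) < inl (c * b)
      simpa only [map_mul] using mul_lt_mul_right (α := H ⋊[_] _) hab (inl c)
    · show (inl (a * c) : H ⋊[_] _) < inl (b * c)
      simpa only [map_mul] using mul_lt_mul_left (α := H ⋊[_] _) hab (inl c)
    · show (inl (φ a) : H ⋊[_] _) < inl (φ b)
      simpa only [zpowersHom_apply, toAdd_ofAdd, zpow_one] using
        inl_apply_lt_inl_apply (ψ := zpowersHom _ φ) hab (Multiplicative.ofAdd 1)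
  · rintro ⟨lo, hleft, hright, hφ⟩
    let := lo
    have : MulLeftStrictMono H := ⟨fun c _ _ hab => hleft _ _ c hab⟩
    have : MulRightStrictMono H := ⟨fun c _ _ hab => hright _ _ c hab⟩
    have hφ_mem : φ ∈ MulAut.strictMonoSubgroup H := hφ
    exact biOrderable_of_strictMono fun k => zpow_mem hφ_mem _
end
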